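/- (Bipartite extension lemma underlying the bipartite algorithm of Section 4.3.) Let G be a finite simple bipartite graph with maximum degree at most Δ, let φ be a proper partial edge coloring of G with color set {1, …, Δ}, and let uv be an uncolored edge. Then there exists a proper partial edge coloring φ' of G with the same color set {1, …, Δ} whose set of colored edges is exactly the set of colored edges of φ together with uv. -/

import Mathlib

/-- A proper partial edge coloring of `G` with color set `C`. -/
def IsProperPartialEC {V : Type*} (G : SimpleGraph V) (C : Set ℕ)
    (φ : Sym2 V → Option ℕ) : Prop :=
  (∀ e : Sym2 V, φ e ≠ none → e ∈ G.edgeSet) ∧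
  (∀ (e : Sym2 V) (c : ℕ), φ e = some c → c ∈ C) ∧
  (∀ e₁ e₂ : Sym2 V, e₁ ≠ e₂ → (∃ x : V, x ∈ e₁ ∧ x ∈ e₂) →
    ∀ c : ℕ, φ e₁ = some c → φ e₂ ≠ some c)

/-!
Kőnig's argument. Pick a color `α` missing at `u` and `β` missing at `v`; both exist because
`uv` is an uncolored edge at each endpoint and degrees are at most `Δ`. Swap `α` and `β` on the
`α/β`-alternating path leaving `v` along an `α`-edge. By bipartiteness this path leaves every
vertex on `v`'s side along `α` and every vertex on `u`'s side along `β`, so it could only enter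
`u` along an `α`-edge, which `u` does not have; hence the swap leaves the edges at `u` alone,
while it makes `α` missing at `v`. Now color `uv` with `α`.
-/

open Function

section KempeSwap

variable {V : Type*} {G : SimpleGraph V} {C : Set ℕ} {φ : Sym2 V → Option ℕ}

namespace IsProperPartialEC

theorem adj (hφ : IsProperPartialEC G C φ) {a b : V} {c : ℕ} (h : φ s(a, b) = some c) :
    G.Adj a b :=
  hφ.1 s(a, b) (by simp [h])

theorem eq_of_color_eq (hφ : IsProperPartialEC G C φ) {a b d : V} {c : ℕ}
    (hb : φ s(a, b) = some c) (hd : φ s(a, d) = some c) : b = d := by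
  by_contra hbd
  exact hφ.2.2 _ _ (fun h => hbd (Sym2.congr_right.mp h)) ⟨a, by simp, by simp⟩ c hb hd

end IsProperPartialEC

theorem exists_missing_color [DecidableEq V] {u v : V} [Fintype (G.neighborSet u)] {Δ : ℕ}
    (hφ : IsProperPartialEC G C φ) (hΔ : G.degree u ≤ Δ) (huv : G.Adj u v)
    (hun : φ s(u, v) = none) : ∃ α ∈ Set.Icc 1 Δ, ∀ w, φ s(u, w) ≠ some α := by
  by_contra! hall
  have hsub : (Finset.Icc 1 Δ).image some ⊆
      ((G.neighborFinset u).erase v).image fun w => φ s(u, w) := by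
    intro o ho
    obtain ⟨c, hc, rfl⟩ := Finset.mem_image.mp ho
    obtain ⟨w, hw⟩ := hall c (by simpa using hc)
    refine Finset.mem_image.mpr ⟨w, Finset.mem_erase.mpr ⟨?_, ?_⟩, hw⟩
    · rintro rfl
      simp [hun] at hw
    · simpa using hφ.adj hw
  have hcard := (Finset.card_le_card hsub).trans Finset.card_image_le
  have herase := Finset.card_erase_lt_of_mem ((G.mem_neighborFinset u v).mpr huv)
  rw [Finset.card_image_of_injective _ (Option.some_injective _), Nat.card_Icc] at hcard
  rw [SimpleGraph.card_neighborFinset_eq_degree] at herase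
  omega

open Classical in
noncomputable def swapColorsOn (φ : Sym2 V → Option ℕ) (α β : ℕ) (S : Set V) (e : Sym2 V) : Option ℕ :=
  if ∃ x ∈ e, x ∈ S then (φ e).map (Equiv.swap α β) else φ e

def IsKempeClosed (φ : Sym2 V → Option ℕ) (α β : ℕ) (S : Set V) : Prop :=
  ∀ x ∈ S, ∀ y, (φ s(x, y) = some α ∨ φ s(x, y) = some β) → y ∈ S

variable {α β : ℕ} {S : Set V}

theorem swapColorsOn_eq_none_iff {e : Sym2 V} :
    swapColorsOn φ α β S e = none ↔ φ e = none := by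
  unfold swapColorsOn
  split_ifs <;> simp

theorem swapColorsOn_of_mem {x : V} (hx : x ∈ S) (w : V) :
    swapColorsOn φ α β S s(x, w) = (φ s(x, w)).map (Equiv.swap α β) :=
  if_pos ⟨x, Sym2.mem_mk_left x w, hx⟩

theorem swapColorsOn_of_not_mem (hS : IsKempeClosed φ α β S) {x : V} (hx : x ∉ S) (w : V) :
    swapColorsOn φ α β S s(x, w) = φ s(x, w) := by
  unfold swapColorsOn
  split_ifs with hmeet
  · obtain ⟨y, hy, hyS⟩ := hmeet
    have hw : w ∈ S := by
      rcases Sym2.mem_iff.mp hy with rfl | rfl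
      exacts [absurd hyS hx, hyS]
    cases hc : φ s(x, w) with
    | none => rfl
    | some c =>
      have hcol : φ s(w, x) = some c := by rwa [Sym2.eq_swap]
      have hα : c ≠ α := fun h => hx (hS w hw x (Or.inl (h ▸ hcol)))
      have hβ : c ≠ β := fun h => hx (hS w hw x (Or.inr (h ▸ hcol)))
      simp [Equiv.swap_apply_of_ne_of_ne hα hβ]
  · rfl

theorem swapColorsOn_ne_of_mem {x : V} (hx : x ∈ S) (hβ : ∀ w, φ s(x, w) ≠ some β) (w : V) :
    swapColorsOn φ α β S s(x, w) ≠ some α := by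
  rw [swapColorsOn_of_mem hx]
  intro h
  obtain ⟨c, hc, hcα⟩ := Option.map_eq_some_iff.mp h
  rw [Equiv.swap_apply_eq_iff, Equiv.swap_apply_left] at hcα
  exact hβ w (hcα ▸ hc)

theorem IsProperPartialEC.swapColorsOn (hφ : IsProperPartialEC G C φ) (hα : α ∈ C)
    (hβ : β ∈ C) (hS : IsKempeClosed φ α β S) :
    IsProperPartialEC G C (swapColorsOn φ α β S) := by
  refine ⟨fun e he => hφ.1 e (mt swapColorsOn_eq_none_iff.mpr he), fun e c hc => ?_, ?_⟩
  · unfold _root_.swapColorsOn at hc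
    split_ifs at hc
    · obtain ⟨c', hc', rfl⟩ := Option.map_eq_some_iff.mp hc
      have := hφ.2.1 e c' hc'
      rw [Equiv.swap_apply_def]
      split_ifs <;> assumption
    · exact hφ.2.1 e c hc
  · rintro e₁ e₂ hne ⟨x, hx₁, hx₂⟩ c h₁ h₂
    obtain ⟨w₁, rfl⟩ := Sym2.mem_iff_exists.mp hx₁
    obtain ⟨w₂, rfl⟩ := Sym2.mem_iff_exists.mp hx₂
    by_cases hx : x ∈ S
    · rw [swapColorsOn_of_mem hx] at h₁ h₂
      obtain ⟨c₁, hc₁, rfl⟩ := Option.map_eq_some_iff.mp h₁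
      obtain ⟨c₂, hc₂, hc⟩ := Option.map_eq_some_iff.mp h₂
      rw [(Equiv.swap α β).injective hc] at hc₂
      exact hφ.2.2 _ _ hne ⟨x, hx₁, hx₂⟩ c₁ hc₁ hc₂
    · rw [swapColorsOn_of_not_mem hS hx] at h₁ h₂
      exact hφ.2.2 _ _ hne ⟨x, hx₁, hx₂⟩ c h₁ h₂

theorem IsProperPartialEC.update [DecidableEq V] (hφ : IsProperPartialEC G C φ) {u v : V} (huv : G.Adj u v)
    (hα : α ∈ C) (hu : ∀ w, φ s(u, w) ≠ some α) (hv : ∀ w, φ s(v, w) ≠ some α) :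
    IsProperPartialEC G C (update φ s(u, v) (some α)) := by
  refine ⟨fun e he => ?_, fun e c hc => ?_, ?_⟩
  · by_cases h : e = s(u, v)
    · exact h ▸ huv
    · exact hφ.1 e (by rwa [update_of_ne h] at he)
  · by_cases h : e = s(u, v)
    · rw [h, update_self, Option.some_inj] at hc
      exact hc ▸ hα
    · exact hφ.2.1 e c (by rwa [update_of_ne h] at hc)
  · rintro e₁ e₂ hne ⟨x, hx₁, hx₂⟩ c h₁ h₂
    have missing : ∀ e, x ∈ s(u, v) → x ∈ e → φ e ≠ some α := by
      intro e hxuv hxe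
      obtain ⟨w, rfl⟩ := Sym2.mem_iff_exists.mp hxe
      rcases Sym2.mem_iff.mp hxuv with rfl | rfl
      exacts [hu w, hv w]
    by_cases he₁ : e₁ = s(u, v)
    · subst he₁
      rw [update_self, Option.some_inj] at h₁
      rw [update_of_ne hne.symm, ← h₁] at h₂
      exact missing e₂ hx₁ hx₂ h₂
    · rw [update_of_ne he₁] at h₁
      by_cases he₂ : e₂ = s(u, v)
      · subst he₂
        rw [update_self, Option.some_inj] at h₂
        exact missing e₁ hx₂ hx₁ (h₂ ▸ h₁)
      · rw [update_of_ne he₂] at h₂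
        exact hφ.2.2 _ _ hne ⟨x, hx₁, hx₂⟩ c h₁ h₂

theorem setOf_update_ne_none {ι κ : Type*} [DecidableEq ι] (g : ι → Option κ) (i : ι) (k : κ) :
    {j | update g i (some k) j ≠ none} = insert i {j | g j ≠ none} := by
  ext j
  by_cases h : j = i <;> simp [h]

end KempeSwap

section Bipartite

variable {V : Type*} {G : SimpleGraph V} {C : Set ℕ} {φ : Sym2 V → Option ℕ}
  {f : V → Bool} {α β : ℕ}

/-- The `α/β`-alternating path from `v` in a graph bipartitioned by `f`: since the sides
alternate along edges, prescribing the color of each step by the side it leaves from makes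
every path from `v` alternate, starting with `α`. -/
def alternatingReach (φ : Sym2 V → Option ℕ) (f : V → Bool) (α β : ℕ) (v : V) : Set V :=
  {x | Relation.ReflTransGen (fun a b => φ s(a, b) = some (if f a = f v then α else β)) v x}

theorem isKempeClosed_alternatingReach (hφ : IsProperPartialEC G C φ)
    (hbip : ∀ a b, G.Adj a b → f a ≠ f b) {v : V} (hv : ∀ w, φ s(v, w) ≠ some β) :
    IsKempeClosed φ α β (alternatingReach φ f α β v) := by
  intro x hx y hxy
  by_cases hfwd : φ s(x, y) = some (if f x = f v then α else β)
  · exact hx.tail hfwd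
  rcases hx.cases_tail with rfl | ⟨z, hz, hzx⟩
  · rw [if_pos rfl] at hfwd
    exact absurd (hxy.resolve_left hfwd) (hv y)
  · -- `x` was entered from `z` along the other color of the pair, so `y = z` by properness
    have hfz : f z = !f x := Bool.eq_not_iff.mpr (hbip z x (hφ.adj hzx))
    have hxy' : φ s(x, y) = some (if f z = f v then α else β) := by
      rw [hfz]
      by_cases hxv : f x = f v <;> simp_all
    obtain rfl : y = z := hφ.eq_of_color_eq hxy' (by rwa [Sym2.eq_swap] at hzx)
    exact hz

theorem not_mem_alternatingReach (hφ : IsProperPartialEC G C φ)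
    (hbip : ∀ a b, G.Adj a b → f a ≠ f b) {u v : V} (hu : ∀ w, φ s(u, w) ≠ some α)
    (huv : f u ≠ f v) : u ∉ alternatingReach φ f α β v := by
  intro hreach
  rcases hreach.cases_tail with rfl | ⟨z, -, hzu⟩
  · exact huv rfl
  · have hfz : f z = f v :=
      (Bool.eq_not_iff.mpr (hbip z u (hφ.adj hzu))).trans (Bool.eq_not_iff.mpr huv.symm).symm
    rw [if_pos hfz, Sym2.eq_swap] at hzu
    exact hu z hzu

end Bipartite

/-- **Bipartite extension lemma.** If `G` is bipartite with maximum degree at most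
`Δ`, any proper partial edge coloring with color set `{1, …, Δ}` can be modified so
that one additional prescribed uncolored edge becomes colored, while the set of
colored edges otherwise stays the same. -/
theorem bipartite_extend_partial_coloring {V : Type*} [Fintype V] [DecidableEq V]
    (G : SimpleGraph V) [DecidableRel G.Adj]
    (f : V → Bool) (hbip : ∀ a b : V, G.Adj a b → f a ≠ f b)
    (Δ : ℕ) (hΔ : ∀ v : V, G.degree v ≤ Δ)
    (φ : Sym2 V → Option ℕ)
    (hφ : IsProperPartialEC G (Set.Icc 1 Δ) φ)
    (u v : V) (huv : G.Adj u v) (hun : φ s(u, v) = none) :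
    ∃ φ' : Sym2 V → Option ℕ,
      IsProperPartialEC G (Set.Icc 1 Δ) φ' ∧
      {e : Sym2 V | φ' e ≠ none} = insert s(u, v) {e : Sym2 V | φ e ≠ none} := by
  obtain ⟨α, hα, hu⟩ := exists_missing_color hφ (hΔ u) huv hun
  obtain ⟨β, hβ, hv⟩ := exists_missing_color hφ (hΔ v) huv.symm (by rwa [Sym2.eq_swap])
  set S := alternatingReach φ f α β v
  have hS : IsKempeClosed φ α β S := isKempeClosed_alternatingReach hφ hbip hv
  have huS : u ∉ S := not_mem_alternatingReach hφ hbip hu (hbip u v huv)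
  have hvS : v ∈ S := Relation.ReflTransGen.refl
  have hu' : ∀ w, swapColorsOn φ α β S s(u, w) ≠ some α := by
    simpa only [swapColorsOn_of_not_mem hS huS] using hu
  refine ⟨update (swapColorsOn φ α β S) s(u, v) (some α),
    (hφ.swapColorsOn hα hβ hS).update huv hα hu' (swapColorsOn_ne_of_mem hvS hv), ?_⟩
  simp only [setOf_update_ne_none, ne_eq, swapColorsOn_eq_none_iff]
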